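/- arXiv:1205.2487 — 2 statements merged into one kernel-verified Lean document; each statement's English description precedes it below -/
import Mathlib

section
/- Let Ω ⊂ ℝⁿ be a bounded open set whose boundary is locally the graph of a Lipschitz function. Then there exists c > 0 such that for any two points x¹, x² in the same connected component Ω_j of Ω, the intrinsic distance satisfies dist_{Ω_j}(x¹, x²) ≤ c |x¹ − x²|, where dist_{Ω_j}(x¹, x²) is the infimum over polygonal paths in Ω_j joining x¹ to x² of the total length Σ_k |y^k − y^{k+1}|. -/
open Metric

/-- `Ω ⊆ ℝ^{m+1}` has a boundary locally described by the graph of a Lipschitz function: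
there are `ρ > 0`, finitely many open sets `U j`, linear isometries `T j` and Lipschitz
functions `φ j : ℝ^m → ℝ` such that every boundary point has a `ρ`-ball inside some `U j`,
and `Ω ∩ U j = {x ∈ U j : φ j (first m coordinates of T j x) > last coordinate of T j x}`. -/
def HasLipschitzBoundary (m : ℕ) (Ω : Set (EuclideanSpace ℝ (Fin (m + 1)))) : Prop :=
  ∃ (ρ : ℝ), 0 < ρ ∧ ∃ (N : ℕ) (U : Fin N → Set (EuclideanSpace ℝ (Fin (m + 1))))
    (T : Fin N → (EuclideanSpace ℝ (Fin (m + 1)) ≃ₗᵢ[ℝ] EuclideanSpace ℝ (Fin (m + 1))))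
    (φ : Fin N → EuclideanSpace ℝ (Fin m) → ℝ) (L : NNReal),
    (∀ j, IsOpen (U j) ∧ LipschitzWith L (φ j)) ∧
    (∀ x ∈ frontier Ω, ∃ j, ball x ρ ⊆ U j) ∧
    (∀ j, Ω ∩ U j = {x ∈ U j |
      φ j (WithLp.toLp 2 (fun i : Fin m => (T j x) i.castSucc)) > (T j x) (Fin.last m)})

/-! Near a boundary point, `Ω` is the set where a `K`-Lipschitz "height" `h` is positive, and `h`
grows at unit speed along a fixed unit vector `-e`. Two nearby points `a, b` of `Ω` are therefore
joined inside `Ω` by the three segments `a → a - s e → b - s e → b` with `s = K |a - b|`, of total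
length `(2K + 1) |a - b|`; near interior points a segment suffices. A Lebesgue number of the
resulting cover of the compact set `closure Ω` makes this uniform below some scale `δ`.
Connectedness of the components and a finite `δ`-net of `Ω` then bound the polygonal distance of
any two points of one component by a constant `B`, which is at most `(B / δ) |x - y|` as soon as
`|x - y| ≥ δ`. -/

open Set Filter
open scoped NNReal

variable {E : Type*} [NormedAddCommGroup E] [NormedSpace ℝ E]

/-- `x` and `y` are joined by a polygonal path in `C` of length at most `L`. -/
inductive HasPolygonalPath (C : Set E) : E → E → ℝ → Prop
  | single {x y : E} {L : ℝ} : segment ℝ x y ⊆ C → dist x y ≤ L → HasPolygonalPath C x y L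
  | cons {x y z : E} {L' L : ℝ} : segment ℝ x y ⊆ C → HasPolygonalPath C y z L' →
      dist x y + L' ≤ L → HasPolygonalPath C x z L

namespace HasPolygonalPath

variable {C : Set E} {x y z : E} {L L' : ℝ}

theorem of_segment_subset (h : segment ℝ x y ⊆ C) : HasPolygonalPath C x y (dist x y) :=
  single h le_rfl

theorem mono_length (h : HasPolygonalPath C x y L) (hL : L ≤ L') : HasPolygonalPath C x y L' := by
  cases h with
  | single hs hd => exact single hs (hd.trans hL)
  | cons hs hp hd => exact cons hs hp (hd.trans hL)

theorem trans (h₁ : HasPolygonalPath C x y L) (h₂ : HasPolygonalPath C y z L') :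
    HasPolygonalPath C x z (L + L') := by
  induction h₁ with
  | single hs hd => exact cons hs h₂ (by linarith)
  | cons hs _ hd ih => exact cons hs (ih h₂) (by linarith)

theorem right_mem (h : HasPolygonalPath C x y L) : y ∈ C := by
  induction h with
  | single hs _ => exact hs (right_mem_segment ℝ _ _)
  | cons _ _ _ ih => exact ih

theorem within_connectedComponentIn (h : HasPolygonalPath C x y L) :
    HasPolygonalPath (connectedComponentIn C x) x y L := by
  induction h with
  | single hs hd =>
    exact single ((convex_segment _ _).isPreconnected.subset_connectedComponentIn
      (left_mem_segment ℝ _ _) hs) hd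
  | @cons x y _ _ _ hs _ hd ih =>
    have hxy := (convex_segment x y).isPreconnected.subset_connectedComponentIn
      (left_mem_segment ℝ _ _) hs
    have hy := hxy (right_mem_segment ℝ x y)
    rw [connectedComponentIn_eq hy] at hxy ⊢
    exact cons hxy ih hd

theorem mem_connectedComponentIn (h : HasPolygonalPath C x y L) : y ∈ connectedComponentIn C x :=
  h.within_connectedComponentIn.right_mem

theorem exists_polygon (h : HasPolygonalPath C x y L) :
    ∃ (M : ℕ) (p : ℕ → E), p 0 = x ∧ p (M + 1) = y ∧
      (∀ j ≤ M, segment ℝ (p j) (p (j + 1)) ⊆ C) ∧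
      ∑ j ∈ Finset.range (M + 1), dist (p j) (p (j + 1)) ≤ L := by
  induction h with
  | @single x y _ hs hd =>
    exact ⟨0, fun j => if j = 0 then x else y, by simp, by simp, by simpa, by simpa⟩
  | @cons x y z _ _ hs _ hd ih =>
    obtain ⟨M, p, hp0, hpM, hseg, hsum⟩ := ih
    refine ⟨M + 1, fun | 0 => x | j + 1 => p j, rfl, hpM, ?_, ?_⟩
    · rintro (_ | j) hj
      · simpa [hp0] using hs
      · exact hseg j (by omega)
    · rw [Finset.sum_range_succ']
      simp only [hp0]
      linarith

end HasPolygonalPath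

theorem hasPolygonalPath_of_height {Ω : Set E} {h : E → ℝ} {K : ℝ≥0} (hh : LipschitzWith K h)
    {e : E} (he : ‖e‖ = 1) (hshift : ∀ w (σ : ℝ), h (w - σ • e) = h w + σ) {z : E} {ρ : ℝ}
    (hΩ : ∀ w ∈ ball z ρ, w ∈ Ω ↔ 0 < h w) {a b : E}
    (ha : a ∈ Ω ∩ ball z (ρ / (2 * K + 1))) (hb : b ∈ Ω ∩ ball z (ρ / (2 * K + 1))) :
    HasPolygonalPath Ω a b ((2 * K + 1) * dist a b) := by
  set r := ρ / (2 * K + 1)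
  set s := K * dist a b
  have hs : 0 ≤ s := by positivity
  have hr : 0 < r := pos_of_mem_ball ha.2
  have hρ : (2 * K + 1) * r = ρ := mul_div_cancel₀ ρ (by positivity)
  have hrρ : r ≤ ρ := by nlinarith [K.coe_nonneg]
  have hpos : ∀ u ∈ Ω ∩ ball z r, 0 < h u := fun u hu => (hΩ u (ball_subset_ball hrρ hu.2)).1 hu.1
  have hab : dist a b < 2 * r := by
    linarith [dist_triangle_right a b z, mem_ball.mp ha.2, mem_ball.mp hb.2]
  have hlow : ∀ u ∈ ball z r, ∀ σ ∈ Icc 0 s, u - σ • e ∈ ball z ρ := by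
    intro u hu σ hσ
    rw [mem_ball] at hu ⊢
    calc dist (u - σ • e) z ≤ dist (u - σ • e) u + dist u z := dist_triangle _ _ _
      _ < 2 * K * r + r := by
        rw [dist_self_sub_left, norm_smul, he, Real.norm_of_nonneg hσ.1, mul_one]
        nlinarith [hσ.2, K.coe_nonneg]
      _ = ρ := by linarith
  have hvert : ∀ u ∈ Ω ∩ ball z r, segment ℝ u (u - s • e) ⊆ Ω := by
    rintro u ⟨huΩ, hu⟩ w hw
    rw [segment_eq_image'] at hw
    obtain ⟨θ, hθ, rfl⟩ := hw
    have hσ : θ * s ∈ Icc 0 s := ⟨by nlinarith [hθ.1], by nlinarith [hθ.2]⟩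
    have hw : u + θ • (u - s • e - u) = u - (θ * s) • e := by module
    dsimp only
    rw [hw, hΩ _ (hlow u hu _ hσ), hshift]
    linarith [hpos u ⟨huΩ, hu⟩, hσ.1]
  have hacross : segment ℝ (a - s • e) (b - s • e) ⊆ Ω := by
    intro w hw
    rw [segment_eq_image] at hw
    obtain ⟨θ, hθ, rfl⟩ := hw
    set u := (1 - θ) • a + θ • b
    have hu : u ∈ segment ℝ a b := by rw [segment_eq_image]; exact ⟨θ, hθ, rfl⟩
    have hur : u ∈ ball z r := (convex_ball z r).segment_subset ha.2 hb.2 hu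
    have hua : dist u a ≤ dist a b := by
      rw [← dist_add_dist_of_mem_segment hu, dist_comm]
      exact le_add_of_nonneg_right dist_nonneg
    have hw : (1 - θ) • (a - s • e) + θ • (b - s • e) = u - s • e := by module
    dsimp only
    rw [hw, hΩ _ (hlow u hur s ⟨hs, le_rfl⟩), hshift]
    have hLip := (abs_le.mp ((Real.dist_eq _ _).symm.trans_le (hh.dist_le_mul u a))).1
    have hKd : (K : ℝ) * dist u a ≤ s := mul_le_mul_of_nonneg_left hua K.coe_nonneg
    linarith [hpos a ha]
  have hlen : dist a (a - s • e) + (dist (a - s • e) (b - s • e) + dist (b - s • e) b) =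
      (2 * K + 1) * dist a b := by
    rw [dist_self_sub_right, dist_sub_right, dist_self_sub_left, norm_smul, he,
      Real.norm_of_nonneg hs]
    ring
  have hup : segment ℝ (b - s • e) b ⊆ Ω := segment_symm ℝ b _ ▸ hvert b hb
  exact .cons (hvert a ha) (.cons hacross (.of_segment_subset hup) le_rfl) hlen.le

theorem EuclideanSpace.lipschitzWith_init (m : ℕ) :
    LipschitzWith 1 fun v : EuclideanSpace ℝ (Fin (m + 1)) =>
      WithLp.toLp 2 fun i : Fin m => v i.castSucc := by
  refine LipschitzWith.of_dist_le_mul fun u v => ?_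
  rw [NNReal.coe_one, one_mul, EuclideanSpace.dist_eq, EuclideanSpace.dist_eq,
    Fin.sum_univ_castSucc]
  exact Real.sqrt_le_sqrt (le_add_of_nonneg_right (sq_nonneg _))

theorem EuclideanSpace.lipschitzWith_eval {ι : Type*} [Fintype ι] (i : ι) :
    LipschitzWith 1 fun v : EuclideanSpace ℝ ι => v i :=
  LipschitzWith.of_dist_le_mul fun u v => by simpa using PiLp.dist_apply_le u v i

theorem HasLipschitzBoundary.exists_height {m : ℕ} {Ω : Set (EuclideanSpace ℝ (Fin (m + 1)))}
    (hΩ : HasLipschitzBoundary m Ω) :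
    ∃ ρ > 0, ∃ K : ℝ≥0, ∀ z ∈ frontier Ω, ∃ (h : EuclideanSpace ℝ (Fin (m + 1)) → ℝ)
      (e : EuclideanSpace ℝ (Fin (m + 1))), LipschitzWith K h ∧ ‖e‖ = 1 ∧
      (∀ w (σ : ℝ), h (w - σ • e) = h w + σ) ∧ ∀ w ∈ ball z ρ, w ∈ Ω ↔ 0 < h w := by
  obtain ⟨ρ, hρ, N, U, T, φ, L, hUφ, hfr, hΩU⟩ := hΩ
  refine ⟨ρ, hρ, L + 1, fun z hz => ?_⟩
  obtain ⟨j, hj⟩ := hfr z hz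
  refine ⟨fun w => φ j (WithLp.toLp 2 fun i : Fin m => T j w i.castSucc) - T j w (Fin.last m),
    (T j).symm (EuclideanSpace.single (Fin.last m) 1), ?_, by simp, fun w σ => ?_, fun w hw => ?_⟩
  · simpa using ((hUφ j).2.comp ((EuclideanSpace.lipschitzWith_init m).comp (T j).lipschitz)).sub
      ((EuclideanSpace.lipschitzWith_eval (Fin.last m)).comp (T j).lipschitz)
  · simp only [map_sub, map_smul, LinearIsometryEquiv.apply_symm_apply, PiLp.sub_apply,
      PiLp.smul_apply, ne_eq, Fin.castSucc_ne_last, not_false_eq_true, PiLp.single_eq_of_ne,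
      smul_eq_mul, mul_zero, sub_zero, PiLp.single_eq_same, mul_one]
    ring
  · have := Set.ext_iff.mp (hΩU j) w
    simp only [mem_inter_iff, mem_ofPred_eq, hj hw, true_and, and_true] at this
    rw [this, sub_pos]

theorem exists_local_polygonal_bound {m : ℕ} {Ω : Set (EuclideanSpace ℝ (Fin (m + 1)))}
    (hΩo : IsOpen Ω) (hΩ : HasLipschitzBoundary m Ω) :
    ∃ c > 0, ∀ z ∈ closure Ω, ∃ r > 0, ∀ a ∈ Ω ∩ ball z r, ∀ b ∈ Ω ∩ ball z r,
      HasPolygonalPath Ω a b (c * dist a b) := by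
  obtain ⟨ρ, hρ, K, hheight⟩ := hΩ.exists_height
  refine ⟨2 * K + 1, by positivity, fun z hz => ?_⟩
  by_cases hzΩ : z ∈ Ω
  · obtain ⟨r, hr, hrΩ⟩ := Metric.isOpen_iff.mp hΩo z hzΩ
    refine ⟨r, hr, fun a ha b hb => ?_⟩
    refine (HasPolygonalPath.of_segment_subset
      (((convex_ball z r).segment_subset ha.2 hb.2).trans hrΩ)).mono_length ?_
    exact le_mul_of_one_le_left dist_nonneg (by linarith [K.coe_nonneg])
  · obtain ⟨h, e, hh, he, hshift, hΩz⟩ := hheight z (hΩo.frontier_eq ▸ ⟨hz, hzΩ⟩)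
    exact ⟨ρ / (2 * K + 1), by positivity,
      fun a ha b hb => hasPolygonalPath_of_height hh he hshift hΩz ha hb⟩

section

variable {Ω : Set E} {c δ : ℝ}

theorem exists_uniform_polygonal_bound (hK : IsCompact (closure Ω))
    (hloc : ∀ z ∈ closure Ω, ∃ r > 0, ∀ a ∈ Ω ∩ ball z r, ∀ b ∈ Ω ∩ ball z r,
      HasPolygonalPath Ω a b (c * dist a b)) :
    ∃ δ > 0, ∀ a ∈ Ω, ∀ b ∈ Ω, dist a b < δ → HasPolygonalPath Ω a b (c * dist a b) := by
  choose! r hr hpath using hloc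
  obtain ⟨δ, hδ, hleb⟩ := lebesgue_number_lemma_of_metric hK
    (c := fun z : closure Ω => ball (z : E) (r z)) (fun _ => isOpen_ball)
    (fun z hz => mem_iUnion.mpr ⟨⟨z, hz⟩, mem_ball_self (hr z hz)⟩)
  refine ⟨δ, hδ, fun a ha b hb hab => ?_⟩
  obtain ⟨z, hz⟩ := hleb a (subset_closure ha)
  exact hpath z z.2 a ⟨ha, hz (mem_ball_self hδ)⟩ b ⟨hb, hz (mem_ball'.mpr hab)⟩

theorem exists_hasPolygonalPath_of_mem_connectedComponentIn (hδ : 0 < δ)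
    (hpath : ∀ a ∈ Ω, ∀ b ∈ Ω, dist a b < δ → HasPolygonalPath Ω a b (c * dist a b))
    {x y : E} (hy : y ∈ connectedComponentIn Ω x) : ∃ L, HasPolygonalPath Ω x y L := by
  have hx : x ∈ connectedComponentIn Ω x :=
    mem_connectedComponentIn (connectedComponentIn_nonempty_iff.mp ⟨y, hy⟩)
  refine isPreconnected_connectedComponentIn.induction₂'
    (fun a b => ∃ L, HasPolygonalPath Ω a b L) (fun a ha => ?_)
    (fun a b d _ _ _ ⟨L, hab⟩ ⟨L', hbd⟩ => ⟨L + L', hab.trans hbd⟩) hx hy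
  filter_upwards [self_mem_nhdsWithin, nhdsWithin_le_nhds (ball_mem_nhds a hδ)] with b hb hab
  have haΩ := connectedComponentIn_subset _ _ ha
  have hbΩ := connectedComponentIn_subset _ _ hb
  exact ⟨⟨_, hpath a haΩ b hbΩ (mem_ball'.mp hab)⟩, ⟨_, hpath b hbΩ a haΩ (mem_ball.mp hab)⟩⟩

theorem exists_hasPolygonalPath_le_const (hΩ : TotallyBounded Ω) (hc : 0 ≤ c) (hδ : 0 < δ)
    (hpath : ∀ a ∈ Ω, ∀ b ∈ Ω, dist a b < δ → HasPolygonalPath Ω a b (c * dist a b)) :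
    ∃ B ≥ 0, ∀ x y, y ∈ connectedComponentIn Ω x → HasPolygonalPath Ω x y B := by
  obtain ⟨t, htΩ, ht, hcover⟩ := finite_approx_of_totallyBounded hΩ δ hδ
  have hnet : ∀ᶠ B in atTop, ∀ p ∈ t ×ˢ t,
      p.2 ∈ connectedComponentIn Ω p.1 → HasPolygonalPath Ω p.1 p.2 B := by
    refine (ht.prod ht).eventually_all.mpr fun p _ => ?_
    by_cases hp : p.2 ∈ connectedComponentIn Ω p.1
    · obtain ⟨L, hL⟩ := exists_hasPolygonalPath_of_mem_connectedComponentIn hδ hpath hp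
      exact (eventually_ge_atTop L).mono fun B hB _ => hL.mono_length hB
    · exact .of_forall fun B h => absurd h hp
  obtain ⟨B, hB, hB0⟩ := (hnet.and (eventually_ge_atTop 0)).exists
  refine ⟨c * δ + B + c * δ, by positivity, fun x y hy => ?_⟩
  have hx := connectedComponentIn_nonempty_iff.mp ⟨y, hy⟩
  have hyΩ := connectedComponentIn_subset _ _ hy
  obtain ⟨i, hit, hxi⟩ := mem_iUnion₂.mp (hcover hx)
  obtain ⟨j, hjt, hyj⟩ := mem_iUnion₂.mp (hcover hyΩ)
  have hpxi := hpath x hx i (htΩ hit) (mem_ball.mp hxi)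
  have hpjy := hpath j (htΩ hjt) y hyΩ (mem_ball'.mp hyj)
  have hij : j ∈ connectedComponentIn Ω i := by
    rw [← connectedComponentIn_eq hpxi.mem_connectedComponentIn, connectedComponentIn_eq hy,
      ← connectedComponentIn_eq hpjy.mem_connectedComponentIn]
    exact mem_connectedComponentIn (htΩ hjt)
  refine ((hpxi.trans (hB (i, j) ⟨hit, hjt⟩ hij)).trans hpjy).mono_length ?_
  gcongr
  · exact (mem_ball.mp hxi).le
  · exact (mem_ball'.mp hyj).le

theorem exists_hasPolygonalPath_le_mul_dist (hc : 0 < c) (hK : IsCompact (closure Ω))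
    (hloc : ∀ z ∈ closure Ω, ∃ r > 0, ∀ a ∈ Ω ∩ ball z r, ∀ b ∈ Ω ∩ ball z r,
      HasPolygonalPath Ω a b (c * dist a b)) :
    ∃ C > 0, ∀ {x y}, y ∈ connectedComponentIn Ω x → HasPolygonalPath Ω x y (C * dist x y) := by
  obtain ⟨δ, hδ, hpath⟩ := exists_uniform_polygonal_bound hK hloc
  obtain ⟨B, hB0, hB⟩ :=
    exists_hasPolygonalPath_le_const (hK.totallyBounded.subset subset_closure) hc.le hδ hpath
  refine ⟨c + B / δ, by positivity, fun {x y} hy => ?_⟩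
  rcases lt_or_ge (dist x y) δ with hxy | hxy
  · refine (hpath x (connectedComponentIn_nonempty_iff.mp ⟨y, hy⟩) y
      (connectedComponentIn_subset _ _ hy) hxy).mono_length ?_
    gcongr
    exact le_add_of_nonneg_right (by positivity)
  · refine (hB x y hy).mono_length ?_
    calc B = B / δ * δ := (div_mul_cancel₀ B hδ.ne').symm
      _ ≤ (c + B / δ) * dist x y := by gcongr; exact le_add_of_nonneg_left hc.le

end

theorem stmt8_general (m : ℕ) (Ω : Set (EuclideanSpace ℝ (Fin (m + 1))))
    (hΩo : IsOpen Ω) (hΩb : Bornology.IsBounded Ω)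
    (hΩlip : HasLipschitzBoundary m Ω) :
    ∃ c > 0, ∀ x y : EuclideanSpace ℝ (Fin (m + 1)), x ∈ Ω →
      y ∈ connectedComponentIn Ω x →
      sInf {ℓ : ℝ | ∃ (M : ℕ) (p : ℕ → EuclideanSpace ℝ (Fin (m + 1))),
          p 0 = x ∧ p (M + 1) = y ∧
          (∀ j ≤ M, ∀ t ∈ Set.Icc (0 : ℝ) 1,
            (1 - t) • p j + t • p (j + 1) ∈ connectedComponentIn Ω x) ∧
          ℓ = ∑ j ∈ Finset.range (M + 1), ‖p j - p (j + 1)‖} ≤ c * ‖x - y‖ := by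
  obtain ⟨c, hc, hloc⟩ := exists_local_polygonal_bound hΩo hΩlip
  obtain ⟨C, hC, hpath⟩ := exists_hasPolygonalPath_le_mul_dist hc hΩb.isCompact_closure hloc
  refine ⟨C, hC, fun x y _ hy => ?_⟩
  obtain ⟨M, p, hp0, hpM, hseg, hlen⟩ := (hpath hy).within_connectedComponentIn.exists_polygon
  refine csInf_le_of_le ⟨0, ?_⟩ ⟨M, p, hp0, hpM, fun j hj t ht => hseg j hj ?_, rfl⟩ ?_
  · rintro _ ⟨_, _, -, -, -, rfl⟩
    positivity
  · rw [segment_eq_image]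
    exact ⟨t, ht, rfl⟩
  · simpa only [dist_eq_norm] using hlen

/-- If `∂Ω` is locally the graph of a Lipschitz function and `Ω` is bounded, then the
intrinsic (polygonal-path) distance inside each connected component of `Ω` is dominated by
a fixed multiple of the Euclidean distance. -/
theorem stmt8 (m : ℕ) (Ω : Set (EuclideanSpace ℝ (Fin (m + 1))))
    (hΩo : IsOpen Ω) (hΩb : Bornology.IsBounded Ω) (hΩne : Ω.Nonempty)
    (hΩlip : HasLipschitzBoundary m Ω) :
    ∃ c > 0, ∀ x y : EuclideanSpace ℝ (Fin (m + 1)), x ∈ Ω →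
      y ∈ connectedComponentIn Ω x →
      sInf {ℓ : ℝ | ∃ (M : ℕ) (p : ℕ → EuclideanSpace ℝ (Fin (m + 1))),
          p 0 = x ∧ p (M + 1) = y ∧
          (∀ j ≤ M, ∀ t ∈ Set.Icc (0 : ℝ) 1,
            (1 - t) • p j + t • p (j + 1) ∈ connectedComponentIn Ω x) ∧
          ℓ = ∑ j ∈ Finset.range (M + 1), ‖p j - p (j + 1)‖} ≤ c * ‖x - y‖ :=
  stmt8_general m Ω hΩo hΩb hΩlip
end

section
/- Let ζ ∈ ℂⁿ with ζ·ζ = 0, |ζ| ≥ 1, and suppose the multiplication operator m_q satisfies ‖m_q‖_{L(Ẋ_ζ^{1/2}, Ẋ_ζ^{-1/2})} < 1. Then the equation −Δ r − 2ζ·∇r + m_q r = −q has a solution r_ζ ∈ Ẋ_ζ^{1/2} given by the Neumann series r_ζ = (I + (−Δ_ζ)^{-1} m_q)^{-1} ((−Δ_ζ)^{-1}(−q)), and it satisfies ‖r_ζ‖_{Ẋ_ζ^{1/2}} ≤ (1 − ‖m_q‖)^{-1} ‖q‖_{Ẋ_ζ^{-1/2}}. -/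
/-- Neumann-series construction of the remainder: if `G = (−Δ_ζ)^{-1} : Ẋ_ζ^{-1/2} → Ẋ_ζ^{1/2}`
has operator norm `1` and the multiplication operator `m_q : Ẋ_ζ^{1/2} → Ẋ_ζ^{-1/2}` has norm
`< 1`, then for any `q ∈ Ẋ_ζ^{-1/2}` the equation `−Δ_ζ r + m_q r = −q` (equivalently
`r = G(−q − m_q r)`) has a solution `r_ζ ∈ Ẋ_ζ^{1/2}` with
`‖r_ζ‖ ≤ (1 − ‖m_q‖)⁻¹ ‖q‖`. -/
theorem stmt12 (Xplus Xminus : Type*)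
    [NormedAddCommGroup Xplus] [NormedSpace ℂ Xplus] [CompleteSpace Xplus]
    [NormedAddCommGroup Xminus] [NormedSpace ℂ Xminus] [CompleteSpace Xminus]
    (G : Xminus →L[ℂ] Xplus) (hG : ‖G‖ = 1)
    (mq : Xplus →L[ℂ] Xminus) (hmq : ‖mq‖ < 1)
    (q : Xminus) :
    ∃ r : Xplus, r = G (-q - mq r) ∧ ‖r‖ ≤ (1 - ‖mq‖)⁻¹ * ‖q‖ := by
  set T : Xplus →L[ℂ] Xplus := G.comp mq with hT
  have hTle : ‖T‖ ≤ ‖mq‖ := by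
    calc ‖T‖ ≤ ‖G‖ * ‖mq‖ := ContinuousLinearMap.opNorm_comp_le _ _
      _ = ‖mq‖ := by rw [hG, one_mul]
  have hTnorm : ‖T‖ < 1 := lt_of_le_of_lt hTle hmq
  have hTneg : ‖-T‖ < 1 := by rwa [norm_neg]
  set u : (Xplus →L[ℂ] Xplus)ˣ := Units.oneSub (-T) hTneg with hu
  set v : Xplus →L[ℂ] Xplus := ((u⁻¹ : (Xplus →L[ℂ] Xplus)ˣ) : Xplus →L[ℂ] Xplus) with hv
  set r : Xplus := v (G (-q)) with hr
  have h1 : (u : Xplus →L[ℂ] Xplus) r = G (-q) := by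
    have hcomp : (u : Xplus →L[ℂ] Xplus) * v = 1 := u.mul_inv
    calc (u : Xplus →L[ℂ] Xplus) (v (G (-q)))
        = ((u : Xplus →L[ℂ] Xplus) * v) (G (-q)) := rfl
      _ = G (-q) := by rw [hcomp]; rfl
  have h2 : r + T r = G (-q) := by
    have huval : (u : Xplus →L[ℂ] Xplus) = 1 + T := by
      simp [hu, Units.val_oneSub, sub_neg_eq_add]
    rw [huval] at h1
    simpa using h1
  refine ⟨r, ?_, ?_⟩
  · have : G (-q - mq r) = G (-q) - T r := by
      simp [hT, map_sub]
    rw [this, ← h2]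
    abel
  · have hinv : ‖v‖ ≤ (1 - ‖T‖)⁻¹ := by
      have hveq : v = ∑' n : ℕ, (-T) ^ n := rfl
      rw [hveq]
      calc ‖∑' n : ℕ, (-T) ^ n‖ ≤ ‖(1 : Xplus →L[ℂ] Xplus)‖ - 1 + (1 - ‖-T‖)⁻¹ :=
            tsum_geometric_le_of_norm_lt_one _ hTneg
        _ ≤ (1 - ‖T‖)⁻¹ := by
            have h1 : ‖(1 : Xplus →L[ℂ] Xplus)‖ ≤ 1 := ContinuousLinearMap.norm_id_le
            rw [norm_neg]; linarith
    have hq : ‖G (-q)‖ ≤ ‖q‖ := by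
      calc ‖G (-q)‖ ≤ ‖G‖ * ‖-q‖ := G.le_opNorm _
        _ = ‖q‖ := by rw [hG, one_mul, norm_neg]
    calc ‖r‖ ≤ ‖v‖ * ‖G (-q)‖ := v.le_opNorm _
      _ ≤ (1 - ‖T‖)⁻¹ * ‖q‖ := by
          apply mul_le_mul hinv hq (norm_nonneg _)
          have : (0:ℝ) < 1 - ‖T‖ := by linarith
          positivity
      _ ≤ (1 - ‖mq‖)⁻¹ * ‖q‖ := by
          apply mul_le_mul_of_nonneg_right _ (norm_nonneg q)
          apply inv_anti₀ (by linarith)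
          linarith
end
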